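/- arXiv:1109.5331 — 3 statements merged into one kernel-verified Lean document; each statement's English description precedes it below -/
import Mathlib

section
/- Let S = ⟨d_1,…,d_m⟩ be a numerical semigroup minimally generated by d_1 < ⋯ < d_m with gcd(d_1,…,d_m)=1, and let β_{i,j} denote its graded Betti numbers, so that ∑_{i=0}^{m-1} ∑_j (-1)^i β_{i,j} z^j = ∏_{i=1}^m (1+z+⋯+z^{d_i-1}) · (1-z)^{m-1} · p(S;z) where p(S;z) is the numerator of H(S;z) over (1-z). Then for every r with 0 ≤ r ≤ m-2, ∑_{i=0}^{m-1} ∑_j (-1)^i β_{i,j} j^r = 0. -/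
open Polynomial

noncomputable def Dop (q : Polynomial ℝ) : Polynomial ℝ := Polynomial.X * Polynomial.derivative q

lemma Dop_single (a : ℝ) (j : ℕ) :
    Dop (Polynomial.C a * Polynomial.X ^ j) = Polynomial.C (a * j) * Polynomial.X ^ j := by
  unfold Dop
  rw [Polynomial.derivative_C_mul, Polynomial.derivative_X_pow]
  cases j with
  | zero => simp
  | succ k =>
    simp only [Nat.add_sub_cancel, map_mul, pow_succ]
    push_cast
    ring

lemma Dop_sum {s : Finset ℕ} (f : ℕ → Polynomial ℝ) :
    Dop (∑ j ∈ s, f j) = ∑ j ∈ s, Dop (f j) := by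
  simp [Dop, Polynomial.derivative_sum, Finset.mul_sum]

lemma Dop_dvd (k : ℕ) (q : Polynomial ℝ) (h : (1 - Polynomial.X) ^ (k + 1) ∣ q) :
    (1 - Polynomial.X) ^ k ∣ Dop q := by
  obtain ⟨g, rfl⟩ := h
  unfold Dop
  rw [Polynomial.derivative_mul, Polynomial.derivative_pow, Nat.add_sub_cancel, mul_add]
  apply dvd_add
  · exact (((dvd_mul_left _ _).mul_right _).mul_right _).mul_left _
  · exact ((pow_dvd_pow _ k.le_succ).mul_right _).mul_left _

lemma Dop_iter_dvd (r : ℕ) : ∀ q : Polynomial ℝ,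
    (1 - Polynomial.X) ^ (r + 1) ∣ q → (1 - Polynomial.X) ∣ Dop^[r] q := by
  induction r with
  | zero => intro q h; simpa using h
  | succ r ih =>
    intro q h
    rw [Function.iterate_succ_apply]
    exact ih _ (Dop_dvd _ _ h)

/-- Fel's identity. For a numerical semigroup minimally generated by
`d_1 < ⋯ < d_m` with gcd 1, with graded Betti numbers `β i j` (supported in `j < N`)
satisfying `∑_{i<m} ∑_j (-1)^i β_{i,j} z^j = ∏_i (1+z+⋯+z^{d_i-1}) · (1-z)^{m-1} · p(S;z)`
where `p(S;1)=1`, one has `∑_{i<m} ∑_j (-1)^i β_{i,j} j^r = 0` for all `0 ≤ r ≤ m-2`. -/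
theorem fel_power_sum_vanish (m : ℕ) (d : Fin m → ℕ) (hd : ∀ i, 0 < d i)
    (hmono : StrictMono d) (hgcd : Finset.univ.gcd d = 1)
    (β : ℕ → ℕ → ℕ) (N : ℕ) (hN : ∀ i j, N ≤ j → β i j = 0)
    (p : Polynomial ℝ) (hp : p.eval 1 = 1)
    (hkey : ∑ i ∈ Finset.range m, ∑ j ∈ Finset.range N,
        Polynomial.C ((-1 : ℝ) ^ i * (β i j : ℝ)) * Polynomial.X ^ j =
      (∏ i, ∑ t ∈ Finset.range (d i), Polynomial.X ^ t) *
        (1 - Polynomial.X) ^ (m - 1) * p) :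
    ∀ r, r + 2 ≤ m →
      ∑ i ∈ Finset.range m, ∑ j ∈ Finset.range N,
        (-1 : ℝ) ^ i * (β i j : ℝ) * (j : ℝ) ^ r = 0 := by
  intro r hr
  set F : Polynomial ℝ := ∑ i ∈ Finset.range m, ∑ j ∈ Finset.range N,
      Polynomial.C ((-1 : ℝ) ^ i * (β i j : ℝ)) * Polynomial.X ^ j with hF
  have hiter : ∀ r : ℕ, Dop^[r] F = ∑ i ∈ Finset.range m, ∑ j ∈ Finset.range N,
      Polynomial.C ((-1 : ℝ) ^ i * (β i j : ℝ) * (j : ℝ) ^ r) * Polynomial.X ^ j := by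
    intro r
    induction r with
    | zero => simp [hF]
    | succ r ih =>
      rw [Function.iterate_succ_apply', ih, Dop_sum]
      refine Finset.sum_congr rfl fun i _ => ?_
      rw [Dop_sum]
      refine Finset.sum_congr rfl fun j _ => ?_
      rw [Dop_single, pow_succ, mul_assoc]
  have hdvd1 : (1 - Polynomial.X) ^ (r + 1) ∣ F := by
    rw [hkey]
    refine Dvd.dvd.mul_right (Dvd.dvd.mul_left (pow_dvd_pow _ ?_) _) _
    omega
  have hdvd2 : (1 - Polynomial.X) ∣ Dop^[r] F := Dop_iter_dvd r F hdvd1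
  obtain ⟨g, hg⟩ := hdvd2
  have heval : (Dop^[r] F).eval 1 = 0 := by
    rw [hg]; simp
  rw [hiter r] at heval
  simp only [Polynomial.eval_finset_sum, Polynomial.eval_mul, Polynomial.eval_C,
    Polynomial.eval_pow, Polynomial.eval_X, one_pow, mul_one] at heval
  exact heval
end

section
/- With the same setup, the top power sum satisfies ∑_{i=0}^{m-1} ∑_j (-1)^i β_{i,j} j^{m-1} = (-1)^{m-1} (m-1)! ∏_{i=1}^m d_i. -/
open Polynomial

noncomputable def TopOp : Polynomial ℝ → Polynomial ℝ := fun g => X * derivative g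

lemma TopOp_sum {α : Type*} (s : Finset α) (f : α → Polynomial ℝ) :
    TopOp (∑ a ∈ s, f a) = ∑ a ∈ s, TopOp (f a) := by
  simp [TopOp, derivative_sum, Finset.mul_sum]

lemma TopOp_iter_sum {α : Type*} (s : Finset α) (n : ℕ) (f : α → Polynomial ℝ) :
    TopOp^[n] (∑ a ∈ s, f a) = ∑ a ∈ s, TopOp^[n] (f a) := by
  induction n generalizing f with
  | zero => simp
  | succ n ih =>
    rw [Function.iterate_succ_apply, TopOp_sum, ih]
    simp [Function.iterate_succ_apply]

lemma TopOp_monomial (a : ℝ) (j : ℕ) : TopOp (C a * X ^ j) = C (a * j) * X ^ j := by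
  cases j with
  | zero => simp [TopOp]
  | succ j =>
    simp only [TopOp, derivative_C_mul_X_pow]
    push_cast
    ring

lemma TopOp_iter_monomial (n : ℕ) (a : ℝ) (j : ℕ) :
    TopOp^[n] (C a * X ^ j) = C (a * (j : ℝ) ^ n) * X ^ j := by
  induction n with
  | zero => simp
  | succ n ih =>
    rw [Function.iterate_succ_apply', ih, TopOp_monomial]
    ring_nf

lemma TopOp_iter_key (n : ℕ) : ∀ g : Polynomial ℝ,
    ((TopOp^[n]) ((1 - X) ^ n * g)).eval 1 = (-1 : ℝ) ^ n * n.factorial * g.eval 1 := by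
  induction n with
  | zero => intro g; simp
  | succ n ih =>
    intro g
    have h1 : TopOp ((1 - X) ^ (n + 1) * g) =
        (1 - X) ^ n * (X * (C (-(n + 1 : ℝ)) * g + (1 - X) * derivative g)) := by
      simp only [TopOp, derivative_mul, derivative_pow, derivative_sub, derivative_one,
        derivative_X, Nat.add_sub_cancel, map_neg]
      push_cast
      ring
    rw [Function.iterate_succ_apply, h1, ih]
    simp [Nat.factorial_succ]
    ring

/-- Fel's top identity. With the same setup as Statement 3,
`∑_{i<m} ∑_j (-1)^i β_{i,j} j^{m-1} = (-1)^{m-1} (m-1)! ∏_i d_i`. -/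
theorem fel_top_power_sum (m : ℕ) (d : Fin m → ℕ) (hd : ∀ i, 0 < d i)
    (hmono : StrictMono d) (hgcd : Finset.univ.gcd d = 1)
    (β : ℕ → ℕ → ℕ) (N : ℕ) (hN : ∀ i j, N ≤ j → β i j = 0)
    (p : Polynomial ℝ) (hp : p.eval 1 = 1)
    (hkey : ∑ i ∈ Finset.range m, ∑ j ∈ Finset.range N,
        Polynomial.C ((-1 : ℝ) ^ i * (β i j : ℝ)) * Polynomial.X ^ j =
      (∏ i, ∑ t ∈ Finset.range (d i), Polynomial.X ^ t) *
        (1 - Polynomial.X) ^ (m - 1) * p) :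
    ∑ i ∈ Finset.range m, ∑ j ∈ Finset.range N,
        (-1 : ℝ) ^ i * (β i j : ℝ) * (j : ℝ) ^ (m - 1) =
      (-1 : ℝ) ^ (m - 1) * ((m - 1).factorial : ℝ) * ∏ i, (d i : ℝ) := by
  set F : Polynomial ℝ := ∑ i ∈ Finset.range m, ∑ j ∈ Finset.range N,
      Polynomial.C ((-1 : ℝ) ^ i * (β i j : ℝ)) * Polynomial.X ^ j with hF
  have e1 : ((TopOp^[m - 1]) F).eval 1 =
      ∑ i ∈ Finset.range m, ∑ j ∈ Finset.range N,
        (-1 : ℝ) ^ i * (β i j : ℝ) * (j : ℝ) ^ (m - 1) := by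
    rw [hF, TopOp_iter_sum]
    simp only [TopOp_iter_sum, TopOp_iter_monomial]
    simp [eval_finset_sum, mul_assoc]
  have e2 : F = (1 - X) ^ (m - 1) *
      ((∏ i, ∑ t ∈ Finset.range (d i), Polynomial.X ^ t) * p) := by
    rw [hkey]; ring
  have e3 : ((TopOp^[m - 1]) F).eval 1 =
      (-1 : ℝ) ^ (m - 1) * ((m - 1).factorial : ℝ) * ∏ i, (d i : ℝ) := by
    rw [e2, TopOp_iter_key]
    simp [eval_prod, hp]
  rw [← e1, e3]
end

section
/- Abstract version of Fel's identities: let P(z) = ∏_{i=1}^m (1+z+⋯+z^{d_i-1}) · (1-z)^{m-1} · Q(z), where d_1,…,d_m are positive integers and Q is any polynomial. Write P(z) = ∑_j a_j z^j. Then ∑_j a_j j^r = 0 for all 0 ≤ r ≤ m-2, and ∑_j a_j j^{m-1} = (-1)^{m-1}(m-1)! · (∏_{i=1}^m d_i) · Q(1). -/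
open Polynomial

noncomputable def felTheta (P : ℝ[X]) : ℝ[X] := X * derivative P

lemma fel_coeff_theta (P : ℝ[X]) (j : ℕ) : (felTheta P).coeff j = j * P.coeff j := by
  cases j with
  | zero => simp [felTheta]
  | succ n =>
      simp [felTheta, coeff_X_mul, coeff_derivative]
      ring

lemma fel_sum_eq (r : ℕ) (P : ℝ[X]) :
    ∑ j ∈ P.support, P.coeff j * (j : ℝ) ^ r = (felTheta^[r] P).eval 1 := by
  induction r generalizing P with
  | zero => simp [eval_eq_sum, Polynomial.sum]
  | succ n ih =>
      rw [Function.iterate_succ_apply, ← ih]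
      have hsub : (felTheta P).support ⊆ P.support := by
        intro j hj
        simp only [mem_support_iff] at hj ⊢
        intro h
        apply hj
        rw [fel_coeff_theta, h, mul_zero]
      rw [Finset.sum_subset hsub]
      · apply Finset.sum_congr rfl
        intro j _
        rw [fel_coeff_theta]
        ring
      · intro j _ hj
        simp only [mem_support_iff, not_not] at hj
        rw [hj, zero_mul]

lemma fel_key : ∀ r k : ℕ, r ≤ k → ∀ R : ℝ[X],
    ∃ S : ℝ[X], felTheta^[r] ((1 - X) ^ k * R) = (1 - X) ^ (k - r) * S ∧
      S.eval 1 = (-1 : ℝ) ^ r * (k.descFactorial r : ℝ) * R.eval 1 := by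
  intro r
  induction r with
  | zero => intro k _ R; exact ⟨R, by simp, by simp⟩
  | succ n ih =>
      intro k hk R
      obtain ⟨k, rfl⟩ : ∃ k', k = k' + 1 := ⟨k - 1, by omega⟩
      set R₁ : ℝ[X] := X * ((1 - X) * derivative R - ((k : ℝ[X]) + 1) * R) with hR₁
      have hstep : felTheta ((1 - X) ^ (k + 1) * R) = (1 - X) ^ k * R₁ := by
        rw [felTheta, derivative_mul, derivative_pow]
        simp only [derivative_sub, derivative_one, derivative_X, zero_sub]
        rw [hR₁, show (C ((k + 1 : ℕ) : ℝ) : ℝ[X]) = (k : ℝ[X]) + 1 by push_cast; simp [map_add, map_one, map_natCast],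
          show k + 1 - 1 = k from rfl]
        ring
      obtain ⟨S, hS1, hS2⟩ := ih k (by omega) R₁
      refine ⟨S, ?_, ?_⟩
      · rw [Function.iterate_succ_apply, hstep, hS1]
        congr 2
        omega
      · have hR₁eval : R₁.eval 1 = -((k : ℝ) + 1) * R.eval 1 := by
          simp [hR₁]
          ring
        rw [hS2, hR₁eval, Nat.succ_descFactorial_succ]
        push_cast
        ring

/-- Abstract Fel identities. If
`P = ∏_{i<m} (1+z+⋯+z^{d_i-1}) · (1-z)^{m-1} · Q` with `d_i ≥ 1`, and `a_j` are the
coefficients of `P`, then `∑_j a_j j^r = 0` for all `0 ≤ r ≤ m-2`, and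
`∑_j a_j j^{m-1} = (-1)^{m-1}(m-1)! (∏ d_i) Q(1)`. -/
theorem abstract_fel_identities (m : ℕ) (d : Fin m → ℕ) (hd : ∀ i, 0 < d i)
    (Q P : Polynomial ℝ)
    (hP : P = (∏ i, ∑ t ∈ Finset.range (d i), Polynomial.X ^ t) *
        (1 - Polynomial.X) ^ (m - 1) * Q) :
    (∀ r, r + 2 ≤ m → ∑ j ∈ P.support, P.coeff j * (j : ℝ) ^ r = 0) ∧
      ∑ j ∈ P.support, P.coeff j * (j : ℝ) ^ (m - 1) =
        (-1 : ℝ) ^ (m - 1) * ((m - 1).factorial : ℝ) * (∏ i, (d i : ℝ)) * Q.eval 1 := by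
  set R : ℝ[X] := (∏ i, ∑ t ∈ Finset.range (d i), X ^ t) * Q with hR
  have hP' : P = (1 - X) ^ (m - 1) * R := by rw [hP, hR]; ring
  have hReval : R.eval 1 = (∏ i, (d i : ℝ)) * Q.eval 1 := by
    simp [hR, eval_prod, eval_finset_sum]
  constructor
  · intro r hr
    obtain ⟨S, hS1, _⟩ := fel_key r (m - 1) (by omega) R
    rw [fel_sum_eq, hP', hS1]
    simp only [eval_mul, eval_pow, eval_sub, eval_one, eval_X, sub_self]
    rw [zero_pow (by omega), zero_mul]
  · obtain ⟨S, hS1, hS2⟩ := fel_key (m - 1) (m - 1) le_rfl R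
    rw [fel_sum_eq, hP', hS1, Nat.sub_self, pow_zero, one_mul, hS2,
      Nat.descFactorial_self, hReval]
    ring
end
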